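/- arXiv:2305.00442 — 3 statements merged into one kernel-verified Lean document; each statement's English description precedes it below -/
import Mathlib

section
/- Let G be a countable set and K: G×G → [0,∞) a kernel with sup_{n∈G} Σ_{u∈G} K(n,u) < 1. Let W: G → (0,∞) and let ψ: G → (0,∞) be bounded, and suppose b₁ := Σ_{u∈G} W(u)·ψ(u) < ∞ and b₂ := sup_{m∈G} Σ_{u∈G} (W(u)/W(m))·K(u,m) < 1. Then every bounded function φ: G → ℝ satisfying 0 ≤ φ(n) ≤ ψ(n) + Σ_{u∈G} K(n,u)·φ(u) for all n ∈ G obeys Σ_{n∈G} W(n)·φ(n) ≤ b₁/(1−b₂). -/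
open ENNReal Filter Finset

namespace Stmt3Aux

variable {G : Type*}

/-- The kernel operator on `ℝ≥0∞`-valued functions. -/
noncomputable def op (K : G → G → ℝ≥0∞) (f : G → ℝ≥0∞) (n : G) : ℝ≥0∞ :=
  ∑' u, K n u * f u

lemma op_mono (K : G → G → ℝ≥0∞) {f g : G → ℝ≥0∞} (h : ∀ n, f n ≤ g n) (n : G) :
    op K f n ≤ op K g n :=
  ENNReal.tsum_le_tsum fun u => mul_le_mul_right (h u) _

lemma op_add (K : G → G → ℝ≥0∞) (f g : G → ℝ≥0∞) (n : G) :
    op K (fun m => f m + g m) n = op K f n + op K g n := by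
  simp only [op, mul_add]
  exact ENNReal.tsum_add

lemma step_bound (K : G → G → ℝ≥0∞) (ψ φ : G → ℝ≥0∞)
    (hφ : ∀ n, φ n ≤ ψ n + op K φ n) :
    ∀ N n, (op K)^[N] φ n ≤ (op K)^[N] ψ n + (op K)^[N + 1] φ n := by
  intro N
  induction N with
  | zero => simpa using hφ
  | succ N ih =>
    intro n
    rw [Function.iterate_succ_apply' (op K) N φ,
        Function.iterate_succ_apply' (op K) N ψ,
        Function.iterate_succ_apply' (op K) (N + 1) φ]
    calc op K ((op K)^[N] φ) n
        ≤ op K (fun m => (op K)^[N] ψ m + (op K)^[N + 1] φ m) n := op_mono K ih n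
      _ = op K ((op K)^[N] ψ) n + op K ((op K)^[N+1] φ) n := op_add ..

lemma partial_bound (K : G → G → ℝ≥0∞) (ψ φ : G → ℝ≥0∞)
    (hφ : ∀ n, φ n ≤ ψ n + op K φ n) :
    ∀ N n, φ n ≤ (∑ k ∈ Finset.range N, (op K)^[k] ψ n) + (op K)^[N] φ n := by
  intro N
  induction N with
  | zero => intro n; simp
  | succ N ih =>
    intro n
    calc φ n ≤ (∑ k ∈ Finset.range N, (op K)^[k] ψ n) + (op K)^[N] φ n := ih n
      _ ≤ (∑ k ∈ Finset.range N, (op K)^[k] ψ n)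
            + ((op K)^[N] ψ n + (op K)^[N + 1] φ n) :=
          add_le_add_right (step_bound K ψ φ hφ N n) _
      _ = (∑ k ∈ Finset.range (N + 1), (op K)^[k] ψ n) + (op K)^[N + 1] φ n := by
          rw [Finset.sum_range_succ]; ring

lemma iterate_sup_bound (K : G → G → ℝ≥0∞) (c : ℝ≥0∞) (hK : ∀ n, ∑' u, K n u ≤ c)
    (φ : G → ℝ≥0∞) (C : ℝ≥0∞) (hφC : ∀ n, φ n ≤ C) :
    ∀ N n, (op K)^[N] φ n ≤ C * c ^ N := by
  intro N
  induction N with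
  | zero => simpa using hφC
  | succ N ih =>
    intro n
    rw [Function.iterate_succ_apply' (op K) N φ]
    calc op K ((op K)^[N] φ) n ≤ ∑' u, K n u * (C * c ^ N) :=
          ENNReal.tsum_le_tsum fun u => mul_le_mul_right (ih u) _
      _ = (∑' u, K n u) * (C * c ^ N) := ENNReal.tsum_mul_right
      _ ≤ c * (C * c ^ N) := mul_le_mul_left (hK n) _
      _ = C * c ^ (N + 1) := by ring

/-- Pointwise bound: a bounded subsolution is dominated by the Neumann series. -/
lemma pointwise_bound (K : G → G → ℝ≥0∞) (ψ φ : G → ℝ≥0∞)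
    (c : ℝ≥0∞) (hc : c < 1) (hK : ∀ n, ∑' u, K n u ≤ c)
    (C : ℝ≥0∞) (hC : C ≠ ∞) (hφC : ∀ n, φ n ≤ C)
    (hφ : ∀ n, φ n ≤ ψ n + op K φ n) (n : G) :
    φ n ≤ ∑' k, (op K)^[k] ψ n := by
  have h1 : Tendsto (fun N => ∑ k ∈ Finset.range N, (op K)^[k] ψ n) atTop
      (nhds (∑' k, (op K)^[k] ψ n)) := ENNReal.tendsto_nat_tsum _
  have h2 : Tendsto (fun N : ℕ => C * c ^ N) atTop (nhds 0) := by
    have := ENNReal.tendsto_pow_atTop_nhds_zero_of_lt_one hc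
    simpa using ENNReal.Tendsto.const_mul this (Or.inr hC)
  have h3 : Tendsto (fun N => (∑ k ∈ Finset.range N, (op K)^[k] ψ n) + C * c ^ N)
      atTop (nhds ((∑' k, (op K)^[k] ψ n) + 0)) := h1.add h2
  rw [add_zero] at h3
  refine ge_of_tendsto' h3 fun N => ?_
  exact le_trans (partial_bound K ψ φ hφ N n)
    (add_le_add_right (iterate_sup_bound K c hK φ C hφC N n) _)

/-- Weighted sums of iterates decay geometrically. -/
lemma weighted_iterate (K : G → G → ℝ≥0∞) (W : G → ℝ≥0∞) (b : ℝ≥0∞)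
    (hWK : ∀ u, ∑' n, W n * K n u ≤ b * W u) (ψ : G → ℝ≥0∞) :
    ∀ k, ∑' n, W n * (op K)^[k] ψ n ≤ b ^ k * ∑' n, W n * ψ n := by
  intro k
  induction k with
  | zero => simp
  | succ k ih =>
    set f := (op K)^[k] ψ with hf
    calc ∑' n, W n * (op K)^[k + 1] ψ n
        = ∑' n, ∑' u, W n * (K n u * f u) := by
          simp only [Function.iterate_succ_apply' (op K) k ψ, op, ENNReal.tsum_mul_left]
          rfl
      _ = ∑' u, ∑' n, W n * (K n u * f u) := ENNReal.tsum_comm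
      _ = ∑' u, f u * ∑' n, W n * K n u := by
          congr 1; funext u
          rw [← ENNReal.tsum_mul_left]
          congr 1; funext n; ring
      _ ≤ ∑' u, f u * (b * W u) :=
          ENNReal.tsum_le_tsum fun u => mul_le_mul_right (hWK u) _
      _ = b * ∑' u, W u * f u := by
          rw [← ENNReal.tsum_mul_left]
          congr 1; funext u; ring
      _ ≤ b * (b ^ k * ∑' n, W n * ψ n) := mul_le_mul_right ih _
      _ = b ^ (k + 1) * ∑' n, W n * ψ n := by ring

end Stmt3Aux

open ENNReal Filter Finset Stmt3Aux in
/-- Discrete subharmonicity bound (Aizenman–Warzel, Theorem 9.2): if `K ≥ 0` has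
`sup_n Σ_u K(n,u) ≤ c < 1`, `W > 0`, `ψ > 0` is bounded with `b₁ = Σ_u W(u)ψ(u) < ∞`, and
`b₂ = sup_m Σ_u (W(u)/W(m))K(u,m) < 1`, then every bounded `φ` with
`0 ≤ φ(n) ≤ ψ(n) + (Kφ)(n)` for all `n` satisfies `Σ_n W(n)φ(n) ≤ b₁/(1−b₂)`. -/
theorem stmt_3 {G : Type*} [Countable G]
    (K : G → G → ℝ) (hK0 : ∀ n u, 0 ≤ K n u)
    (hKsum : ∀ n, Summable (K n))
    (c : ℝ) (hc : c < 1) (hKc : ∀ n, ∑' u, K n u ≤ c)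
    (W : G → ℝ) (hW : ∀ n, 0 < W n)
    (ψ : G → ℝ) (hψpos : ∀ n, 0 < ψ n) (hψbdd : ∃ Cψ : ℝ, ∀ n, ψ n ≤ Cψ)
    (hb1 : Summable fun u => W u * ψ u)
    (b₂ : ℝ) (hb2lt : b₂ < 1)
    (hb2sum : ∀ m, Summable fun u => W u / W m * K u m)
    (hb2 : ∀ m, ∑' u, W u / W m * K u m ≤ b₂)
    (φ : G → ℝ) (hφbdd : ∃ Cφ : ℝ, ∀ n, |φ n| ≤ Cφ)
    (hφ0 : ∀ n, 0 ≤ φ n)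
    (hφ : ∀ n, φ n ≤ ψ n + ∑' u, K n u * φ u) :
    Summable (fun n => W n * φ n) ∧
      ∑' n, W n * φ n ≤ (∑' u, W u * ψ u) / (1 - b₂) := by
  classical
  rcases isEmpty_or_nonempty G with hG | hG
  · refine ⟨Summable.of_finite, ?_⟩
    rw [tsum_empty, tsum_empty]
    simp
  obtain ⟨n₀⟩ := hG
  obtain ⟨Cφ, hCφ⟩ := hφbdd
  have hb2nn : 0 ≤ b₂ :=
    le_trans (tsum_nonneg fun u => mul_nonneg (le_of_lt (div_pos (hW u) (hW n₀))) (hK0 u n₀))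
      (hb2 n₀)
  -- ENNReal versions
  set K' : G → G → ℝ≥0∞ := fun n u => ENNReal.ofReal (K n u) with hK'
  set W' : G → ℝ≥0∞ := fun n => ENNReal.ofReal (W n) with hW'
  set ψ' : G → ℝ≥0∞ := fun n => ENNReal.ofReal (ψ n) with hψ'
  set φ' : G → ℝ≥0∞ := fun n => ENNReal.ofReal (φ n) with hφ'
  -- summability facts
  have hsum_Kφ : ∀ n, Summable fun u => K n u * φ u := by
    intro n
    refine Summable.of_nonneg_of_le (fun u => mul_nonneg (hK0 n u) (hφ0 u))
      (fun u => ?_) ((hKsum n).mul_right Cφ)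
    exact mul_le_mul_of_nonneg_left (le_trans (le_abs_self _) (hCφ u)) (hK0 n u)
  have hsum_WK : ∀ u, Summable fun n => W n * K n u := by
    intro u
    have := (hb2sum u).mul_right (W u)
    refine this.congr fun n => ?_
    have hu := (hW u).ne'
    field_simp
  have htsum_WK : ∀ u, ∑' n, W n * K n u ≤ b₂ * W u := by
    intro u
    have h1 : ∑' n, W n * K n u = (∑' n, W n / W u * K n u) * W u := by
      rw [← tsum_mul_right]
      congr 1; funext n
      have hu := (hW u).ne'
      field_simp
    rw [h1]
    exact mul_le_mul_of_nonneg_right (hb2 u) (hW u).le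
  -- the ENNReal subharmonicity inequality
  have hφ'' : ∀ n, φ' n ≤ ψ' n + op K' φ' n := by
    intro n
    have h1 : ENNReal.ofReal (φ n) ≤ ENNReal.ofReal (ψ n + ∑' u, K n u * φ u) :=
      ENNReal.ofReal_le_ofReal (hφ n)
    rw [ENNReal.ofReal_add (hψpos n).le
      (tsum_nonneg fun u => mul_nonneg (hK0 n u) (hφ0 u))] at h1
    refine h1.trans (add_le_add_right (le_of_eq ?_) _)
    rw [ENNReal.ofReal_tsum_of_nonneg (fun u => mul_nonneg (hK0 n u) (hφ0 u)) (hsum_Kφ n)]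
    simp only [op]
    congr 1; funext u
    exact ENNReal.ofReal_mul (hK0 n u)
  have hK'c : ∀ n, ∑' u, K' n u ≤ ENNReal.ofReal c := by
    intro n
    rw [hK', ← ENNReal.ofReal_tsum_of_nonneg (hK0 n) (hKsum n)]
    exact ENNReal.ofReal_le_ofReal (hKc n)
  have hc' : ENNReal.ofReal c < 1 := by
    rw [← ENNReal.ofReal_one]
    rcases le_or_gt c 0 with h | h
    · rw [ENNReal.ofReal_eq_zero.mpr h]; simp
    · exact ENNReal.ofReal_lt_ofReal_iff_of_nonneg h.le |>.mpr hc
  have hφC' : ∀ n, φ' n ≤ ENNReal.ofReal Cφ := fun n =>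
    ENNReal.ofReal_le_ofReal (le_trans (le_abs_self _) (hCφ n))
  have hWK' : ∀ u, ∑' n, W' n * K' n u ≤ ENNReal.ofReal b₂ * W' u := by
    intro u
    have h1 : ∑' n, W' n * K' n u = ENNReal.ofReal (∑' n, W n * K n u) := by
      rw [ENNReal.ofReal_tsum_of_nonneg (fun n => mul_nonneg (hW n).le (hK0 n u)) (hsum_WK u)]
      congr 1; funext n; exact (ENNReal.ofReal_mul (hW n).le).symm
    rw [h1, hW', ← ENNReal.ofReal_mul hb2nn]
    exact ENNReal.ofReal_le_ofReal (htsum_WK u)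
  -- pointwise Neumann bound
  have hpw : ∀ n, φ' n ≤ ∑' k, (op K')^[k] ψ' n :=
    pointwise_bound K' ψ' φ' (ENNReal.ofReal c) hc' hK'c (ENNReal.ofReal Cφ)
      ENNReal.ofReal_ne_top hφC' hφ''
  set b₁ : ℝ := ∑' u, W u * ψ u with hb₁
  have hB1 : ∑' n, W' n * ψ' n = ENNReal.ofReal b₁ := by
    rw [hb₁, ENNReal.ofReal_tsum_of_nonneg (fun u => mul_nonneg (hW u).le (hψpos u).le) hb1]
    congr 1; funext u; exact (ENNReal.ofReal_mul (hW u).le).symm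
  have hb₁nn : 0 ≤ b₁ := tsum_nonneg fun u => mul_nonneg (hW u).le (hψpos u).le
  have hwit := weighted_iterate K' W' (ENNReal.ofReal b₂) hWK' ψ'
  have hb2' : ENNReal.ofReal b₂ < 1 := by
    rw [← ENNReal.ofReal_one]
    exact (ENNReal.ofReal_lt_ofReal_iff_of_nonneg hb2nn).mpr hb2lt
  have hmain : ∑' n, W' n * φ' n ≤ ENNReal.ofReal b₁ * (1 - ENNReal.ofReal b₂)⁻¹ := by
    calc ∑' n, W' n * φ' n
        ≤ ∑' n, W' n * ∑' k, (op K')^[k] ψ' n :=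
          ENNReal.tsum_le_tsum fun n => mul_le_mul_right (hpw n) _
      _ = ∑' n, ∑' k, W' n * (op K')^[k] ψ' n := by
          congr 1; funext n; exact ENNReal.tsum_mul_left.symm
      _ = ∑' k, ∑' n, W' n * (op K')^[k] ψ' n := ENNReal.tsum_comm
      _ ≤ ∑' k, ENNReal.ofReal b₂ ^ k * ENNReal.ofReal b₁ := by
          refine ENNReal.tsum_le_tsum fun k => ?_
          rw [← hB1]; exact hwit k
      _ = (1 - ENNReal.ofReal b₂)⁻¹ * ENNReal.ofReal b₁ := by
          rw [ENNReal.tsum_mul_right, ENNReal.tsum_geometric]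
      _ = ENNReal.ofReal b₁ * (1 - ENNReal.ofReal b₂)⁻¹ := mul_comm _ _
  have hsub : (1 : ℝ≥0∞) - ENNReal.ofReal b₂ = ENNReal.ofReal (1 - b₂) := by
    rw [ENNReal.ofReal_sub 1 hb2nn, ENNReal.ofReal_one]
  have h1b2pos : (0:ℝ) < 1 - b₂ := by linarith
  have hrhs_ne : ENNReal.ofReal b₁ * (1 - ENNReal.ofReal b₂)⁻¹ ≠ ∞ := by
    rw [hsub]
    refine ENNReal.mul_ne_top ENNReal.ofReal_ne_top ?_
    rw [Ne, ENNReal.inv_eq_top]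
    exact ne_of_gt (ENNReal.ofReal_pos.mpr h1b2pos)
  have hT_ne : ∑' n, W' n * φ' n ≠ ∞ := ne_top_of_le_ne_top hrhs_ne hmain
  have hsummable : Summable fun n => W n * φ n := by
    have := ENNReal.summable_toReal hT_ne
    refine this.congr fun n => ?_
    rw [ENNReal.toReal_mul, hW', hφ', ENNReal.toReal_ofReal (hW n).le,
      ENNReal.toReal_ofReal (hφ0 n)]
  refine ⟨hsummable, ?_⟩
  have hTeq : ∑' n, W' n * φ' n = ENNReal.ofReal (∑' n, W n * φ n) := by
    rw [ENNReal.ofReal_tsum_of_nonneg (fun n => mul_nonneg (hW n).le (hφ0 n)) hsummable]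
    congr 1; funext n; exact (ENNReal.ofReal_mul (hW n).le).symm
  have := ENNReal.toReal_mono hrhs_ne hmain
  rw [hTeq, ENNReal.toReal_ofReal (tsum_nonneg fun n => mul_nonneg (hW n).le (hφ0 n)),
    hsub, ENNReal.toReal_mul, ENNReal.toReal_ofReal hb₁nn, ENNReal.toReal_inv,
    ENNReal.toReal_ofReal h1b2pos.le] at this
  rw [div_eq_mul_inv]
  exact this
end

section
/- Let N ≥ 1 and let A, B be N×N complex matrices such that I+A and I+B are both invertible. Then exp(−Σ_{m,n} |((A−B)(I+B)^{−1})_{m,n}|) ≤ |det(I+B)| / |det(I+A)| ≤ exp(Σ_{m,n} |((B−A)(I+A)^{−1})_{m,n}|), where the sums run over all pairs of indices. -/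
open Finset

lemma abs_det_one_add_le {N : ℕ} (M : Matrix (Fin N) (Fin N) ℂ) :
    ‖(1 + M).det‖ ≤
      Real.exp (∑ m : Fin N, ∑ n : Fin N, ‖M m n‖) := by
  have h1 : ‖(1 + M).det‖ ≤
      ∑ σ : Equiv.Perm (Fin N), ∏ i, ‖(1 + M) (σ i) i‖ := by
    rw [Matrix.det_apply]
    refine (norm_sum_le _ _).trans (Finset.sum_le_sum fun σ _ => ?_)
    rcases Int.units_eq_one_or (Equiv.Perm.sign σ) with h | h <;>
      simp [h, norm_prod, le_refl]
  have h2 : ∑ σ : Equiv.Perm (Fin N), ∏ i, ‖(1 + M) (σ i) i‖ ≤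
      ∑ p ∈ Fintype.piFinset (fun _ : Fin N => (Finset.univ : Finset (Fin N))),
        ∏ i, ‖(1 + M) (p i) i‖ := by
    have himg : ∑ p ∈ (Finset.univ.image fun σ : Equiv.Perm (Fin N) => ⇑σ),
        ∏ i, ‖(1 + M) (p i) i‖ =
        ∑ σ : Equiv.Perm (Fin N), ∏ i, ‖(1 + M) (σ i) i‖ :=
      Finset.sum_image (fun σ _ τ _ h => Equiv.coe_fn_injective h)
    rw [← himg]
    refine Finset.sum_le_sum_of_subset_of_nonneg ?_ ?_
    · intro p _
      simp [Fintype.mem_piFinset]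
    · intro p _ _
      exact Finset.prod_nonneg fun i _ => norm_nonneg _
  have hps : (∏ i : Fin N, ∑ j : Fin N, ‖(1 + M) j i‖) =
      ∑ p ∈ Fintype.piFinset (fun _ : Fin N => (Finset.univ : Finset (Fin N))),
        ∏ i, ‖(1 + M) (p i) i‖ :=
    Finset.prod_univ_sum _ _
  rw [← hps] at h2
  have h3 : ∏ i : Fin N, ∑ j : Fin N, ‖(1 + M) j i‖ ≤
      ∏ i : Fin N, Real.exp (∑ j : Fin N, ‖M j i‖) := by
    refine Finset.prod_le_prod (fun i _ => Finset.sum_nonneg fun j _ =>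
      norm_nonneg _) (fun i _ => ?_)
    have hle : ∑ j : Fin N, ‖(1 + M) j i‖ ≤
        1 + ∑ j : Fin N, ‖M j i‖ := by
      have : ∀ j : Fin N, ‖(1 + M) j i‖ ≤
          (if j = i then (1:ℝ) else 0) + ‖M j i‖ := by
        intro j
        have : (1 + M) j i = (if j = i then (1:ℂ) else 0) + M j i := by
          simp [Matrix.add_apply, Matrix.one_apply]
        rw [this]
        refine (norm_add_le _ _).trans ?_
        gcongr
        split <;> simp
      calc ∑ j : Fin N, ‖(1 + M) j i‖
          ≤ ∑ j : Fin N, ((if j = i then (1:ℝ) else 0) + ‖M j i‖) :=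
            Finset.sum_le_sum fun j _ => this j
        _ = 1 + ∑ j : Fin N, ‖M j i‖ := by
            rw [Finset.sum_add_distrib, Finset.sum_ite_eq' Finset.univ i (fun _ => (1:ℝ))]
            simp
    exact hle.trans (by linarith [Real.add_one_le_exp (∑ j : Fin N, ‖M j i‖)])
  rw [← Real.exp_sum] at h3
  have := h1.trans (h2.trans h3)
  rwa [Finset.sum_comm] at this

lemma ratio_le_aux {N : ℕ} (A B : Matrix (Fin N) (Fin N) ℂ) (hA : IsUnit (1 + A).det) :
    ‖(1 + B).det‖ / ‖(1 + A).det‖ ≤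
      Real.exp (∑ m : Fin N, ∑ n : Fin N,
        ‖((B - A) * (1 + A)⁻¹) m n‖) := by
  have hfac : (1 + (B - A) * (1 + A)⁻¹) * (1 + A) = 1 + B := by
    rw [add_mul, one_mul, Matrix.nonsing_inv_mul_cancel_right _ _ hA]
    abel
  have hdet : (1 + B).det = (1 + (B - A) * (1 + A)⁻¹).det * (1 + A).det := by
    rw [← hfac, Matrix.det_mul]
  have hne : ‖(1 + A).det‖ ≠ 0 := by
    simpa using hA.ne_zero
  rw [hdet, norm_mul, mul_div_assoc, div_self hne, mul_one]
  exact abs_det_one_add_le _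

/-- Determinant-ratio bound: for `N×N` complex matrices `A`, `B` with `I+A` and `I+B`
invertible,
`exp(−Σ|((A−B)(I+B)^{−1})_{mn}|) ≤ |det(I+B)|/|det(I+A)| ≤ exp(Σ|((B−A)(I+A)^{−1})_{mn}|)`. -/
theorem stmt_14 (N : ℕ) (hN : 1 ≤ N) (A B : Matrix (Fin N) (Fin N) ℂ)
    (hA : IsUnit (1 + A).det) (hB : IsUnit (1 + B).det) :
    Real.exp (-(∑ m : Fin N, ∑ n : Fin N,
        ‖((A - B) * (1 + B)⁻¹) m n‖)) ≤
      ‖(1 + B).det‖ / ‖(1 + A).det‖ ∧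
    ‖(1 + B).det‖ / ‖(1 + A).det‖ ≤
      Real.exp (∑ m : Fin N, ∑ n : Fin N,
        ‖((B - A) * (1 + A)⁻¹) m n‖) := by
  refine ⟨?_, ratio_le_aux A B hA⟩
  have h := ratio_le_aux B A hB
  have haA : (0:ℝ) < ‖(1 + A).det‖ := by
    have : (1 + A).det ≠ 0 := hA.ne_zero
    simpa [norm_pos_iff] using this
  have haB : (0:ℝ) < ‖(1 + B).det‖ := by
    have : (1 + B).det ≠ 0 := hB.ne_zero
    simpa [norm_pos_iff] using this
  rw [Real.exp_neg]
  have hpos : 0 < ‖(1 + A).det‖ / ‖(1 + B).det‖ := div_pos haA haB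
  have hinv := inv_anti₀ hpos h
  rwa [inv_div] at hinv
end

section
/- Let Λ be a finite set and ϱ: Λ×Λ → [0,∞) satisfy ϱ(n,n) = 0 for all n and the triangle inequality ϱ(n,l) ≤ ϱ(n,k) + ϱ(k,l) for all n, k, l ∈ Λ. Let B be a Λ×Λ complex matrix with c := max_{n∈Λ} Σ_{l∈Λ} e^{ϱ(n,l)}·|B(n,l)| < 1. Then I+B is invertible and |((I+B)^{−1})(n,l)| ≤ (1−c)^{−1}·e^{−ϱ(n,l)} for all n, l ∈ Λ. -/
/-- Combes–Thomas-type weighted Neumann series bound: if `ϱ` is a pseudometric-type weight on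
a finite set `Λ` (vanishing on the diagonal and satisfying the triangle inequality) and `B` is
a `Λ×Λ` matrix with `max_n Σ_l e^{ϱ(n,l)}|B(n,l)| ≤ c < 1`, then `I+B` is invertible and
`|((I+B)^{−1})(n,l)| ≤ (1−c)^{−1} e^{−ϱ(n,l)}`. -/
theorem stmt_15 {Λ : Type*} [Fintype Λ] [DecidableEq Λ] [Nonempty Λ]
    (ϱ : Λ → Λ → ℝ) (hϱ0 : ∀ n l, 0 ≤ ϱ n l) (hϱdiag : ∀ n, ϱ n n = 0)
    (hϱtri : ∀ n k l, ϱ n l ≤ ϱ n k + ϱ k l)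
    (B : Matrix Λ Λ ℂ) (c : ℝ) (hc1 : c < 1)
    (hc : ∀ n, ∑ l : Λ, Real.exp (ϱ n l) * ‖B n l‖ ≤ c) :
    IsUnit (1 + B).det ∧
      ∀ n l : Λ, ‖(1 + B)⁻¹ n l‖ ≤ (1 - c)⁻¹ * Real.exp (-ϱ n l) := by
  classical
  have hc0 : 0 ≤ c :=
    le_trans (Finset.sum_nonneg fun l _ =>
      mul_nonneg (Real.exp_pos _).le (norm_nonneg _)) (hc (Classical.arbitrary Λ))
  -- set up the linfty operator norm on matrices
  letI : NormedRing (Matrix Λ Λ ℂ) := Matrix.linftyOpNormedRing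
  letI : NormedAlgebra ℂ (Matrix Λ Λ ℂ) := Matrix.linftyOpNormedAlgebra
  haveI : CompleteSpace (Matrix Λ Λ ℂ) := FiniteDimensional.complete ℂ _
  -- `‖B‖ ≤ c`
  have hnorm : ‖B‖ ≤ c := by
    rw [Matrix.linfty_opNorm_def]
    have h : (Finset.univ.sup fun i => ∑ j, ‖B i j‖₊) ≤ (⟨c, hc0⟩ : NNReal) := by
      refine Finset.sup_le fun n _ => ?_
      refine NNReal.coe_le_coe.mp ?_
      push_cast
      refine le_trans (Finset.sum_le_sum fun l _ => ?_) (hc n)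
      have h1 : (1 : ℝ) ≤ Real.exp (ϱ n l) := Real.one_le_exp (hϱ0 n l)
      calc ‖B n l‖ = 1 * ‖B n l‖ := by
            rw [one_mul]
        _ ≤ Real.exp (ϱ n l) * ‖B n l‖ :=
            mul_le_mul_of_nonneg_right h1 (norm_nonneg _)
    exact_mod_cast h
  have hnegnorm : ‖-B‖ < 1 := by rw [norm_neg]; exact lt_of_le_of_lt hnorm hc1
  -- key entrywise bound on powers
  have key : ∀ (k : ℕ) (n l : Λ),
      ‖((-B) ^ k) n l‖ ≤ c ^ k * Real.exp (-ϱ n l) := by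
    intro k
    induction k with
    | zero =>
      intro n l
      by_cases h : n = l
      · subst h
        simp [Matrix.one_apply, hϱdiag n]
      · simp [Matrix.one_apply, h, Real.exp_nonneg]
    | succ k ih =>
      intro n l
      have hmul : ((-B) ^ (k + 1)) n l = ∑ m, (-B) n m * ((-B) ^ k) m l := by
        rw [pow_succ']; rfl
      rw [hmul]
      calc ‖∑ m, (-B) n m * ((-B) ^ k) m l‖
          ≤ ∑ m, ‖(-B) n m * ((-B) ^ k) m l‖ :=
            norm_sum_le _ _
        _ = ∑ m, ‖B n m‖ * ‖((-B) ^ k) m l‖ := by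
            refine Finset.sum_congr rfl fun m _ => ?_
            rw [norm_mul]
            simp [Matrix.neg_apply]
        _ ≤ ∑ m, ‖B n m‖ * (c ^ k * Real.exp (-ϱ m l)) :=
            Finset.sum_le_sum fun m _ =>
              mul_le_mul_of_nonneg_left (ih m l) (norm_nonneg _)
        _ ≤ ∑ m, ‖B n m‖ *
              (c ^ k * (Real.exp (ϱ n m) * Real.exp (-ϱ n l))) := by
            refine Finset.sum_le_sum fun m _ => ?_
            refine mul_le_mul_of_nonneg_left (mul_le_mul_of_nonneg_left ?_
              (pow_nonneg hc0 _)) (norm_nonneg _)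
            rw [← Real.exp_add]
            exact Real.exp_le_exp.mpr (by linarith [hϱtri n m l])
        _ = (c ^ k * Real.exp (-ϱ n l)) *
              ∑ m, Real.exp (ϱ n m) * ‖B n m‖ := by
            rw [Finset.mul_sum]
            exact Finset.sum_congr rfl fun m _ => by ring
        _ ≤ (c ^ k * Real.exp (-ϱ n l)) * c := by
            exact mul_le_mul_of_nonneg_left (hc n)
              (mul_nonneg (pow_nonneg hc0 _) (Real.exp_nonneg _))
        _ = c ^ (k + 1) * Real.exp (-ϱ n l) := by ring
  -- the Neumann series
  set N : Matrix Λ Λ ℂ := ∑' k : ℕ, (-B) ^ k with hN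
  have hsummable : Summable (fun k : ℕ => (-B) ^ k) :=
    summable_geometric_of_norm_lt_one hnegnorm
  have hu : (1 + B) * N = 1 := by
    have := mul_neg_geom_series (-B) hnegnorm
    rw [sub_neg_eq_add] at this
    exact this
  have hunit : IsUnit (1 + B) := by
    have := isUnit_one_sub_of_norm_lt_one hnegnorm
    simpa [sub_neg_eq_add] using this
  have hdet : IsUnit (1 + B).det := (Matrix.isUnit_iff_isUnit_det _).mp hunit
  refine ⟨hdet, fun n l => ?_⟩
  have hinv : (1 + B)⁻¹ = N := Matrix.inv_eq_right_inv hu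
  rw [hinv]
  -- entry evaluation is a continuous linear map
  let ev : Matrix Λ Λ ℂ →ₗ[ℂ] ℂ :=
    { toFun := fun M => M n l
      map_add' := fun M₁ M₂ => rfl
      map_smul' := fun r M => rfl }
  have hev : Continuous ev := LinearMap.continuous_of_finiteDimensional ev
  let evL : Matrix Λ Λ ℂ →L[ℂ] ℂ := ⟨ev, hev⟩
  have hNev : N n l = ∑' k : ℕ, ((-B) ^ k) n l := by
    have := evL.map_tsum hsummable
    exact this
  rw [hNev]
  have hgeom : HasSum (fun k : ℕ => c ^ k * Real.exp (-ϱ n l))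
      ((1 - c)⁻¹ * Real.exp (-ϱ n l)) :=
    (hasSum_geometric_of_lt_one hc0 hc1).mul_right _
  calc ‖∑' k : ℕ, ((-B) ^ k) n l‖
      = ‖∑' k : ℕ, ((-B) ^ k) n l‖ := rfl
    _ ≤ (1 - c)⁻¹ * Real.exp (-ϱ n l) := by
        refine tsum_of_norm_bounded hgeom fun k => ?_
        exact key k n l
end
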